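/- arXiv:1511.03631 — 2 statements merged into one kernel-verified Lean document; each statement's English description precedes it below -/
import Mathlib

section
/- Define normal form terms of degree k over a unary operator f and finite generator set D in a Boolean algebra: N_0 = { D^α : α : D → {−1,1} }, and N_{k+1} = { D^α ∧ (⋀_{τ ∈ F_k^β} f(τ)) ∧ (⋀_{τ ∉ F_k^β} −f(τ)) } ranging over α : D → {−1,1} and β : N_k → {−1,1} (with F_k^β = {τ ∈ N_k : β(τ)=1}). Then for every k, the elements of N_k (as interpreted in any Boolean algebra with a normal additive unary operator f) sum to 1, and two syntactically distinct forms in N_k have meet 0. -/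
/-!
For a finite family `g`, the meets `⋀ⱼ ±g j` over all sign choices partition `⊤`: expanding
`⋀ⱼ (g j ⊔ (g j)ᶜ) = ⊤` by distributivity gives their join, and two different sign choices
disagree at some `j`. A normal form of degree `k + 1` is the meet of such a sign-meet over `D`
with one over the `f`-images of the forms of degree `k`, and the pairwise meets of two
partitions of `⊤` again partition `⊤`.
-/

/-- The constituent `D^α` in a Boolean algebra: the meet over `d ∈ D` of `d`
or its complement, according to the choice function `α` (`true` plays the
role of `1`, `false` the role of `-1`). -/
def consBA {A : Type} [BooleanAlgebra A] (D : Finset A) (α : D → Bool) : A :=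
  D.attach.inf (fun d => if α d then (d : A) else (d : A)ᶜ)

/-- Index data for normal forms of degree `k`: a form of degree `0` is given
by a choice function `α : D → {-1,1}`, and a form of degree `k+1` by a pair
`(α, β)` where `β` selects a subset of the degree-`k` forms. -/
def NFIdx {A : Type} (D : Finset A) : ℕ → Type
  | 0 => D → Bool
  | k + 1 => (D → Bool) × (NFIdx D k → Bool)

def nfIdxFinite {A : Type} (D : Finset A) : ∀ k, Finite (NFIdx D k)
  | 0 => inferInstanceAs (Finite (D → Bool))
  | k + 1 =>
    haveI := nfIdxFinite D k
    inferInstanceAs (Finite ((D → Bool) × (NFIdx D k → Bool)))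

noncomputable instance {A : Type} (D : Finset A) (k : ℕ) : Fintype (NFIdx D k) :=
  @Fintype.ofFinite _ (nfIdxFinite D k)

/-- The normal form of degree `k` with index data `i`: for degree `0` it is
the constituent `D^α`; for degree `k+1` it is `D^α` meet, for each degree-`k`
form `τ`, either `f τ` or its complement according to `β`. -/
noncomputable def nfVal {A : Type} [BooleanAlgebra A] (f : A → A) (D : Finset A) :
    ∀ k, NFIdx D k → A
  | 0, α => consBA D α
  | k + 1, i =>
    consBA D i.1 ⊓
      (Finset.univ : Finset (NFIdx D k)).inf
        (fun j => if i.2 j then f (nfVal f D k j) else (f (nfVal f D k j))ᶜ)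

open Finset Function

section SignedInf

variable {α ι κ : Type*} [BooleanAlgebra α]

/-- Unlike in `Finpartition`, members may be `⊥`. -/
def IsPartitionOfTop [Fintype ι] (a : ι → α) : Prop :=
  univ.sup a = ⊤ ∧ Pairwise (Disjoint on a)

theorem IsPartitionOfTop.congr_fintype {i₁ i₂ : Fintype ι} {a : ι → α}
    (h : @IsPartitionOfTop _ _ _ i₁ a) : @IsPartitionOfTop _ _ _ i₂ a := by
  rwa [Subsingleton.elim i₂ i₁]

theorem IsPartitionOfTop.prod [Fintype ι] [Fintype κ] {a : ι → α} {b : κ → α}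
    (ha : IsPartitionOfTop a) (hb : IsPartitionOfTop b) :
    IsPartitionOfTop fun p : ι × κ => a p.1 ⊓ b p.2 := by
  refine ⟨by rw [← univ_product_univ, ← sup_inf_sup, ha.1, hb.1, top_inf_eq], ?_⟩
  rintro ⟨i, j⟩ ⟨i', j'⟩ hne
  obtain hi | hj : i ≠ i' ∨ j ≠ j' := by simpa only [ne_eq, Prod.mk.injEq, not_and_or] using hne
  · exact (ha.2 hi).mono inf_le_left inf_le_left
  · exact (hb.2 hj).mono inf_le_right inf_le_right

variable [Fintype ι]

def signedInf (g : ι → α) (β : ι → Bool) : α :=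
  univ.inf fun j => if β j then g j else (g j)ᶜ

theorem sup_signedInf_eq_top [Fintype (ι → Bool)] (g : ι → α) :
    univ.sup (signedInf g) = ⊤ := by
  classical
  refine top_le_iff.1 ?_
  calc ⊤ = univ.inf fun j => (univ : Finset Bool).sup fun b => if b then g j else (g j)ᶜ := by
        simp
    _ = (univ.pi fun _ : ι => (univ : Finset Bool)).sup fun p => univ.attach.inf fun j =>
          if p j.1 j.2 then g j else (g j)ᶜ := inf_sup _ _ _
    _ ≤ univ.sup (signedInf g) := by
        refine Finset.sup_le fun p _ => ?_
        rw [inf_attach univ fun j => if p j (mem_univ j) then g j else (g j)ᶜ]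
        exact le_sup (f := signedInf g) (mem_univ fun j => p j (mem_univ j))

theorem pairwise_disjoint_signedInf (g : ι → α) : Pairwise (Disjoint on (signedInf g)) := by
  intro β β' hne
  obtain ⟨j, hj⟩ := Function.ne_iff.1 hne
  refine Disjoint.mono (inf_le (mem_univ j)) (inf_le (mem_univ j)) ?_
  cases hβ : β j <;> cases hβ' : β' j <;> simp_all [disjoint_compl_left, disjoint_compl_right]

theorem isPartitionOfTop_signedInf [Fintype (ι → Bool)] (g : ι → α) :
    IsPartitionOfTop (signedInf g) :=
  ⟨sup_signedInf_eq_top g, pairwise_disjoint_signedInf g⟩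

end SignedInf

theorem consBA_eq_signedInf {A : Type} [BooleanAlgebra A] (D : Finset A) :
    consBA D = signedInf fun d : D => (d : A) := by
  ext α
  rw [consBA, signedInf, univ_eq_attach]

theorem isPartitionOfTop_consBA {A : Type} [BooleanAlgebra A] (D : Finset A)
    [Fintype (D → Bool)] : IsPartitionOfTop (consBA D) := by
  rw [consBA_eq_signedInf]
  exact isPartitionOfTop_signedInf _

theorem nfVal_partition_general {A : Type} [BooleanAlgebra A] (f : A → A) (D : Finset A)
    (k : ℕ) :
    (Finset.univ : Finset (NFIdx D k)).sup (nfVal f D k) = ⊤ ∧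
    ∀ i j : NFIdx D k, i ≠ j → nfVal f D k i ⊓ nfVal f D k j = ⊥ := by
  classical
  -- `NFIdx D k` carries the `Fintype.ofFinite` instance, not the pi or product one.
  have hpart : IsPartitionOfTop (nfVal f D k) := by
    cases k with
    | zero => exact .congr_fintype (isPartitionOfTop_consBA D)
    | succ k =>
      exact .congr_fintype ((isPartitionOfTop_consBA D).prod
        (isPartitionOfTop_signedInf fun τ => f (nfVal f D k τ)))
  exact ⟨hpart.1, fun i j hij => (hpart.2 hij).eq_bot⟩

/-- For each degree `k`, the normal forms of degree `k` join to `1` and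
forms with distinct index data are pairwise disjoint. -/
theorem nfVal_partition {A : Type} [BooleanAlgebra A] (f : A → A) (D : Finset A)
    (hD : D.Nonempty) (hadd : ∀ a b : A, f (a ⊔ b) = f a ⊔ f b) (hnorm : f ⊥ = ⊥)
    (k : ℕ) :
    (Finset.univ : Finset (NFIdx D k)).sup (nfVal f D k) = ⊤ ∧
    ∀ i j : NFIdx D k, i ≠ j → nfVal f D k i ⊓ nfVal f D k j = ⊥ :=
  nfVal_partition_general f D k
end

section
/- Every modal formula of modal depth at most 1 whose variables lie in a finite set X is Kripke-semantically equivalent to a disjunction of degree-1 modal constituents over X. -/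
inductive ModalForm (P : Type) where
  | var : P → ModalForm P
  | fls : ModalForm P
  | neg : ModalForm P → ModalForm P
  | conj : ModalForm P → ModalForm P → ModalForm P
  | disj : ModalForm P → ModalForm P → ModalForm P
  | dia : ModalForm P → ModalForm P
  deriving DecidableEq

/-- A Kripke model with worlds `W`: accessibility relation and valuation. -/
structure Kripke (P W : Type) where
  R : W → W → Prop
  V : W → P → Prop

/-- Truth of a modal formula at a world of a Kripke model; `◇φ` holds at `w`
iff `φ` holds at some `R`-successor of `w`. -/
def ModalForm.sat {P W : Type} (M : Kripke P W) : W → ModalForm P → Prop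
  | w, .var p => M.V w p
  | _, .fls => False
  | w, .neg φ => ¬ ModalForm.sat M w φ
  | w, .conj φ ψ => ModalForm.sat M w φ ∧ ModalForm.sat M w ψ
  | w, .disj φ ψ => ModalForm.sat M w φ ∨ ModalForm.sat M w ψ
  | w, .dia φ => ∃ u, M.R w u ∧ ModalForm.sat M u φ

/-- The literal `p` or `¬p` according to `b` (`true` for `1`, `false` for `-1`). -/
def ModalForm.lit {P : Type} (b : Bool) (p : P) : ModalForm P :=
  if b then .var p else .neg (.var p)

/-- The degree-0 constituent `X^α`. -/
noncomputable def mconstituent {P : Type} (X : Finset P) (α : X → Bool) : ModalForm P :=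
  X.attach.toList.foldr (fun p acc => .conj (ModalForm.lit (α p) p.1) acc) (.neg .fls)

/-- Conjunction of a list of formulas; the empty conjunction is `⊤`. -/
def mBigConj {P : Type} (l : List (ModalForm P)) : ModalForm P :=
  l.foldr .conj (.neg .fls)

/-- Disjunction of a list of formulas; the empty disjunction is `⊥`. -/
def mBigDisj {P : Type} (l : List (ModalForm P)) : ModalForm P :=
  l.foldr .disj .fls

/-- The degree-1 modal constituent determined by `α : X → {-1,1}` and the
subset `S` of the degree-0 constituents:
`X^α ∧ ⋀_{γ ∈ S} ◇X^γ ∧ ⋀_{γ ∉ S} ¬◇X^γ`. -/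
noncomputable def deg1 {P : Type} [DecidableEq P] (X : Finset P)
    (α : X → Bool) (S : (X → Bool) → Bool) : ModalForm P :=
  .conj (mconstituent X α)
    (mBigConj ((Finset.univ : Finset (X → Bool)).toList.map
      (fun γ => if S γ then .dia (mconstituent X γ)
                else .neg (.dia (mconstituent X γ)))))

/-- Modal depth: maximal nesting of `◇`. -/
def ModalForm.depth {P : Type} : ModalForm P → ℕ
  | .var _ => 0
  | .fls => 0
  | .neg φ => φ.depth
  | .conj φ ψ => max φ.depth ψ.depth
  | .disj φ ψ => max φ.depth ψ.depth
  | .dia φ => φ.depth + 1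

def ModalForm.vars {P : Type} [DecidableEq P] : ModalForm P → Finset P
  | .var p => {p}
  | .fls => ∅
  | .neg φ => φ.vars
  | .conj φ ψ => φ.vars ∪ ψ.vars
  | .disj φ ψ => φ.vars ∪ ψ.vars
  | .dia φ => φ.vars

/-! The truth of a formula of depth at most 1 at a world `w` depends only on the degree-1 type
of `w` over `X`: the valuation of `X` at `w` together with the set of valuations of `X` realised
at successors of `w`. The degree-1 constituent indexed by `(α, S)` holds at `w` exactly when `w`
has type `(α, S)`, so `φ` is equivalent to the disjunction of the constituents of the types
realised by some world satisfying `φ`. -/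

namespace Kripke

variable {P W : Type} (M : Kripke P W) (X : Finset P)

open Classical in
noncomputable def atomType (w : W) : X → Bool := fun p => decide (M.V w p)

open Classical in
noncomputable def succTypes (w : W) : (X → Bool) → Bool :=
  fun γ => decide (∃ u, M.R w u ∧ M.atomType X u = γ)

noncomputable def type1 (w : W) : (X → Bool) × ((X → Bool) → Bool) :=
  (M.atomType X w, M.succTypes X w)

variable {M X} in
open Classical in
theorem succTypes_eq_true_iff {w : W} {γ : X → Bool} :
    M.succTypes X w γ = true ↔ ∃ u, M.R w u ∧ M.atomType X u = γ :=
  decide_eq_true_iff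

end Kripke

namespace ModalForm

variable {P W W' : Type}

theorem sat_mBigConj (M : Kripke P W) (w : W) (l : List (ModalForm P)) :
    sat M w (mBigConj l) ↔ ∀ ψ ∈ l, sat M w ψ := by
  induction l with
  | nil => simp [mBigConj, sat]
  | cons ψ l ih =>
    simp only [mBigConj, List.foldr_cons, sat, List.forall_mem_cons] at ih ⊢
    rw [ih]

theorem sat_mBigDisj (M : Kripke P W) (w : W) (l : List (ModalForm P)) :
    sat M w (mBigDisj l) ↔ ∃ ψ ∈ l, sat M w ψ := by
  induction l with
  | nil => simp [mBigDisj, sat]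
  | cons ψ l ih =>
    simp only [mBigDisj, List.foldr_cons, sat, List.exists_mem_cons_iff] at ih ⊢
    rw [ih]

theorem sat_lit (M : Kripke P W) (w : W) (b : Bool) (p : P) :
    sat M w (lit b p) ↔ (M.V w p ↔ b = true) := by
  cases b <;> simp [lit, sat]

theorem sat_mconstituent_iff (M : Kripke P W) (w : W) (X : Finset P) (α : X → Bool) :
    sat M w (mconstituent X α) ↔ M.atomType X w = α := by
  have hconj : mconstituent X α = mBigConj (X.attach.toList.map fun p => lit (α p) p.1) := by
    simp only [mconstituent, mBigConj, List.foldr_map]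
  rw [hconj, sat_mBigConj, funext_iff]
  simp only [List.forall_mem_map, Finset.mem_toList, Finset.mem_attach, forall_const]
  refine forall_congr' fun p => ?_
  rw [sat_lit, Kripke.atomType]
  cases α p <;> simp

theorem sat_dia_mconstituent_iff (M : Kripke P W) (w : W) (X : Finset P) (γ : X → Bool) :
    sat M w (dia (mconstituent X γ)) ↔ M.succTypes X w γ = true := by
  simp only [sat, sat_mconstituent_iff, Kripke.succTypes_eq_true_iff]

theorem sat_deg1_iff [DecidableEq P] (M : Kripke P W) (w : W) (X : Finset P) (α : X → Bool)
    (S : (X → Bool) → Bool) :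
    sat M w (deg1 X α S) ↔ M.type1 X w = (α, S) := by
  have hsucc : ∀ γ, sat M w (if S γ then dia (mconstituent X γ)
      else neg (dia (mconstituent X γ))) ↔ M.succTypes X w γ = S γ := by
    intro γ
    cases S γ <;> simp [sat.eq_3, sat_dia_mconstituent_iff]
  simp only [deg1, sat, sat_mconstituent_iff, sat_mBigConj, List.forall_mem_map,
    Finset.mem_toList, Finset.mem_univ, forall_const, hsucc, Kripke.type1, Prod.mk.injEq,
    funext_iff]

section Congr

variable [DecidableEq P] {M : Kripke P W} {N : Kripke P W'} {w : W} {w' : W'} {X : Finset P}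

theorem sat_congr (hatom : M.atomType X w = N.atomType X w') :
    ∀ φ : ModalForm P, φ.vars ⊆ X →
      (∀ ψ, ψ.depth < φ.depth → ψ.vars ⊆ X →
        (sat M w (dia ψ) ↔ sat N w' (dia ψ))) →
      (sat M w φ ↔ sat N w' φ)
  | var p, hv, _ => by
    have hp : p ∈ X := hv (Finset.mem_singleton_self p)
    simpa [sat, Kripke.atomType] using congrFun hatom ⟨p, hp⟩
  | fls, _, _ => Iff.rfl
  | neg φ, hv, hdia => not_congr (sat_congr hatom φ hv hdia)
  | conj φ ψ, hv, hdia => by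
    rw [vars, Finset.union_subset_iff] at hv
    exact and_congr (sat_congr hatom φ hv.1 fun χ h => hdia χ (lt_max_of_lt_left h))
      (sat_congr hatom ψ hv.2 fun χ h => hdia χ (lt_max_of_lt_right h))
  | disj φ ψ, hv, hdia => by
    rw [vars, Finset.union_subset_iff] at hv
    exact or_congr (sat_congr hatom φ hv.1 fun χ h => hdia χ (lt_max_of_lt_left h))
      (sat_congr hatom ψ hv.2 fun χ h => hdia χ (lt_max_of_lt_right h))
  | dia φ, hv, hdia => hdia φ (Nat.lt_succ_self _) hv

theorem sat_congr_of_depth_eq_zero {φ : ModalForm P} (hd : φ.depth = 0) (hv : φ.vars ⊆ X)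
    (hatom : M.atomType X w = N.atomType X w') : sat M w φ ↔ sat N w' φ :=
  sat_congr hatom φ hv fun _ h => absurd h (by omega)

theorem sat_dia_of_succTypes_eq {ψ : ModalForm P} (hd : ψ.depth = 0) (hv : ψ.vars ⊆ X)
    (hsucc : M.succTypes X w = N.succTypes X w') (h : sat M w (dia ψ)) : sat N w' (dia ψ) := by
  obtain ⟨u, hwu, hu⟩ := h
  have hu_type : N.succTypes X w' (M.atomType X u) = true :=
    hsucc ▸ M.succTypes_eq_true_iff.2 ⟨u, hwu, rfl⟩
  obtain ⟨u', hwu', hu'⟩ := N.succTypes_eq_true_iff.1 hu_type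
  exact ⟨u', hwu', (sat_congr_of_depth_eq_zero hd hv hu'.symm).1 hu⟩

theorem sat_congr_of_depth_le_one {φ : ModalForm P} (hd : φ.depth ≤ 1) (hv : φ.vars ⊆ X)
    (htype : M.type1 X w = N.type1 X w') : sat M w φ ↔ sat N w' φ := by
  obtain ⟨hatom, hsucc⟩ := Prod.mk.inj htype
  refine sat_congr hatom φ hv fun ψ hψ hvψ => ?_
  have hd0 : ψ.depth = 0 := by omega
  exact ⟨sat_dia_of_succTypes_eq hd0 hvψ hsucc, sat_dia_of_succTypes_eq hd0 hvψ hsucc.symm⟩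

end Congr

end ModalForm

/-- Every modal formula of modal depth at most 1 with variables in a finite
set `X` is Kripke-semantically equivalent to a disjunction of degree-1 modal
constituents over `X`. -/
theorem depth_one_normal_form {P : Type} [DecidableEq P] (X : Finset P)
    (φ : ModalForm P) (hd : φ.depth ≤ 1) (hv : φ.vars ⊆ X) :
    ∃ L : List ((X → Bool) × ((X → Bool) → Bool)),
      ∀ (W : Type) (M : Kripke P W) (w : W),
        ModalForm.sat M w φ ↔
          ModalForm.sat M w (mBigDisj (L.map (fun p => deg1 X p.1 p.2))) := by
  classical
  let realised : Finset ((X → Bool) × ((X → Bool) → Bool)) :=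
    Finset.univ.filter fun p =>
      ∃ (W : Type) (M : Kripke P W) (w : W), M.type1 X w = p ∧ ModalForm.sat M w φ
  refine ⟨realised.toList, fun W M w => ?_⟩
  simp only [ModalForm.sat_mBigDisj, List.mem_map, Finset.mem_toList, exists_exists_and_eq_and,
    ModalForm.sat_deg1_iff]
  constructor
  · intro hφ
    exact ⟨M.type1 X w, Finset.mem_filter.2 ⟨Finset.mem_univ _, W, M, w, rfl, hφ⟩, rfl⟩
  · rintro ⟨p, hp, htype⟩
    obtain ⟨-, W', M', w', htype', hφ'⟩ := Finset.mem_filter.1 hp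
    exact (ModalForm.sat_congr_of_depth_le_one hd hv (htype.trans htype'.symm)).2 hφ'
end
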